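/- (Closed-form solution of the gradient-tracking recursion, equation used to derive Lemma 3.2.) Let α ∈ ℝ, let W^{(0)}, W^{(1)}, … ∈ ℝ^{N×N} be any matrices, let G^{(0)}, G^{(1)}, … ∈ ℝ^{N} be any vectors with the convention G^{(−1)} := 0, and let x^{(k)}, g^{(k)} ∈ ℝ^{N} satisfy x^{(k+1)} = W^{(k)}(x^{(k)} − α·g^{(k)}), g^{(k+1)} = W^{(k)} g^{(k)} + G^{(k+1)} − G^{(k)}, with g^{(0)} = G^{(0)}. Then for every k ≥ 1: x^{(k)} = (W^{(k−1)}·W^{(k−2)}·⋯·W^{(0)})·x^{(0)} − α·Σ_{j=0}^{k−1} (k−j)·(W^{(k−1)}·⋯·W^{(j)})·(G^{(j)} − G^{(j−1)}). -/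

import Mathlib

/-!
Both recursions are linear with transition matrices `W^{(k)}`, so each is solved by induction
on `k`, pushing `W^{(k)}` through a sum of products `W^{(k-1)} ⋯ W^{(j)}`. With `G^{(-1)} = 0`,
`g^{(k)} = ∑_{j ≤ k} (W^{(k-1)} ⋯ W^{(j)}) (G^{(j)} - G^{(j-1)})`; feeding this into the
recursion for `x` adds one more copy of every increment `G^{(j)} - G^{(j-1)}` at each step,
which produces the weights `k - j`.
-/

open Matrix

noncomputable section

/-- The ordered matrix product `W^{(a)} W^{(a-1)} ⋯ W^{(b)}` (larger indices on the left);
for `a < b` it is the empty product `1`. -/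
def prodDesc {N : ℕ} (W : ℕ → Matrix (Fin N) (Fin N) ℝ) (a b : ℕ) :
    Matrix (Fin N) (Fin N) ℝ :=
  ((List.range (a + 1 - b)).map (fun t => W (a - t))).prod

open Finset

section ProdDesc

variable {N : ℕ} (W : ℕ → Matrix (Fin N) (Fin N) ℝ)

@[simp]
lemma prodDesc_succ_self (a : ℕ) : prodDesc W a (a + 1) = 1 := by
  simp [prodDesc]

@[simp]
lemma prodDesc_self (a : ℕ) : prodDesc W a a = W a := by
  simp [prodDesc]

lemma prodDesc_succ_left {a b : ℕ} (h : b ≤ a + 1) :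
    prodDesc W (a + 1) b = W (a + 1) * prodDesc W a b := by
  rw [prodDesc, Nat.sub_add_comm h, List.range_succ_eq_map, List.map_cons, List.map_map,
    List.prod_cons]
  simp [prodDesc, Function.comp_def]

lemma mulVec_sum_prodDesc (a : ℕ) {n : ℕ} (hn : n ≤ a + 2) (v : ℕ → Fin N → ℝ) :
    W (a + 1) *ᵥ ∑ j ∈ range n, prodDesc W a j *ᵥ v j =
      ∑ j ∈ range n, prodDesc W (a + 1) j *ᵥ v j := by
  rw [mulVec_sum]
  refine sum_congr rfl fun j hj => ?_
  rw [mulVec_mulVec, prodDesc_succ_left W (by have := mem_range.mp hj; omega)]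

end ProdDesc

section GradientTracking

variable {N : ℕ} (W : ℕ → Matrix (Fin N) (Fin N) ℝ) (D g : ℕ → Fin N → ℝ)

theorem tracking_eq_sum (hg : ∀ k, g (k + 1) = W k *ᵥ g k + D (k + 1)) (hg0 : g 0 = D 0)
    (a : ℕ) : g (a + 1) = ∑ j ∈ range (a + 2), prodDesc W a j *ᵥ D j := by
  induction a with
  | zero => simp [hg, hg0, sum_range_succ]
  | succ a ih =>
    rw [hg, ih, mulVec_sum_prodDesc W a le_rfl, sum_range_succ _ (a + 2), prodDesc_succ_self,
      one_mulVec]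

theorem iterate_eq_sum (α : ℝ) (x : ℕ → Fin N → ℝ)
    (hx : ∀ k, x (k + 1) = W k *ᵥ (x k - α • g k))
    (hg : ∀ k, g (k + 1) = W k *ᵥ g k + D (k + 1)) (hg0 : g 0 = D 0) (a : ℕ) :
    x (a + 1) = prodDesc W a 0 *ᵥ x 0
      - α • ∑ j ∈ range (a + 1), (((a + 1 : ℕ) : ℝ) - j) • (prodDesc W a j *ᵥ D j) := by
  induction a with
  | zero => simp [hx, hg0, mulVec_sub, mulVec_smul]
  | succ a ih =>
    have weights : ∀ j ∈ range (a + 2),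
        (((a + 2 : ℕ) : ℝ) - j) • (prodDesc W (a + 1) j *ᵥ D j) =
          prodDesc W (a + 1) j *ᵥ ((((a + 1 : ℕ) : ℝ) - j) • D j) +
            prodDesc W (a + 1) j *ᵥ D j := fun j _ => by
      rw [← mulVec_smul, ← mulVec_add]; congr 1; push_cast; module
    have last_weight : (((a + 1 : ℕ) : ℝ) - (a + 1 : ℕ)) • D (a + 1) = 0 := by simp
    simp only [← mulVec_smul] at ih
    rw [sum_congr rfl weights, sum_add_distrib, sum_range_succ _ (a + 1), last_weight,
      mulVec_zero, add_zero, ← mulVec_sum_prodDesc W a (Nat.le_succ _),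
      ← mulVec_sum_prodDesc W a le_rfl, prodDesc_succ_left W (Nat.zero_le _), ← mulVec_mulVec,
      hx, ih, tracking_eq_sum W D g hg hg0]
    simp only [mulVec_sub, mulVec_smul, smul_add]
    abel

end GradientTracking

/-- **Closed-form solution of the gradient-tracking recursion (used to derive Lemma 3.2).**
If `x^{(k+1)} = W^{(k)}(x^{(k)} - α g^{(k)})`, `g^{(k+1)} = W^{(k)} g^{(k)} + G^{(k+1)} - G^{(k)}`
with `g^{(0)} = G^{(0)}` and the convention `G^{(-1)} = 0`, then for every `k ≥ 1`,
`x^{(k)} = (W^{(k-1)} ⋯ W^{(0)}) x^{(0)}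
  - α ∑_{j=0}^{k-1} (k-j) (W^{(k-1)} ⋯ W^{(j)}) (G^{(j)} - G^{(j-1)})`. -/
theorem gt_recursion_closed_form {N : ℕ} (α : ℝ)
    (W : ℕ → Matrix (Fin N) (Fin N) ℝ)
    (G : ℤ → (Fin N → ℝ)) (hGm1 : G (-1) = 0)
    (x g : ℕ → (Fin N → ℝ))
    (hx : ∀ k, x (k + 1) = W k *ᵥ (x k - α • g k))
    (hg : ∀ k, g (k + 1) = W k *ᵥ g k + G ((k : ℤ) + 1) - G (k : ℤ))
    (hg0 : g 0 = G 0) :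
    ∀ k : ℕ, 1 ≤ k →
      x k = (prodDesc W (k - 1) 0) *ᵥ x 0
        - α • ∑ j ∈ Finset.range k,
            ((k : ℝ) - (j : ℝ)) • ((prodDesc W (k - 1) j) *ᵥ (G (j : ℤ) - G ((j : ℤ) - 1))) := by
  intro k hk
  obtain ⟨a, rfl⟩ := Nat.exists_eq_add_of_le' hk
  set D : ℕ → Fin N → ℝ := fun j => G j - G (j - 1) with hD
  have hgD : ∀ k, g (k + 1) = W k *ᵥ g k + D (k + 1) := fun k => by
    rw [hg, hD]; push_cast; simp only [add_sub_cancel_right]; abel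
  have hg0D : g 0 = D 0 := by simp [hD, hg0, hGm1]
  simpa [hD] using iterate_eq_sum W D g α x hx hgD hg0D a
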